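/- Let K be a field and let D be a finite-dimensional division algebra over K which is central over K (i.e. the center of D equals K) and whose dimension over K is p^2 for a prime number p. If a and b are elements of D that do not commute (a*b ≠ b*a), then the K-subalgebra of D generated by a and b is all of D. -/

import Mathlib

/-!
Every subalgebra of a finite-dimensional division algebra `D` is a division ring over which `D`
is free, so its dimension divides `dim D = p ^ 2` and hence is `1`, `p` or `p ^ 2`. The chain
`K < K[a] < K[a, b]` is strict: `a` is not central, and `b ∉ K[a]` since `K[a]` is commutative.
So `K[a, b]` has dimension `p ^ 2` and is all of `D`.
-/

open Module

namespace Subalgebra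

theorem commute_of_mem_bot {R A : Type*} [CommSemiring R] [Semiring A] [Algebra R A] {a : A}
    (ha : a ∈ (⊥ : Subalgebra R A)) (b : A) : Commute a b := by
  obtain ⟨r, rfl⟩ := Algebra.mem_bot.1 ha
  exact Algebra.commutes r b

variable {K D : Type*} [Field K]

theorem finrank_lt_finrank_of_lt [Ring D] [Algebra K D] [FiniteDimensional K D]
    {S T : Subalgebra K D} (h : S < T) : finrank K S < finrank K T := by
  rw [← finrank_toSubmodule, ← finrank_toSubmodule]
  exact Submodule.finrank_lt_finrank_of_lt (toSubmodule.strictMono h)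

variable [DivisionRing D] [Algebra K D] [FiniteDimensional K D]

theorem finrank_dvd_finrank (S : Subalgebra K D) : finrank K S ∣ finrank K D := by
  let := divisionRingOfFiniteDimensional K S
  exact ⟨finrank S D, (finrank_mul_finrank K S D).symm⟩

theorem eq_top_of_bot_lt_of_lt_of_finrank_eq_prime_sq {p : ℕ} (hp : p.Prime)
    (hdim : finrank K D = p ^ 2) {F E : Subalgebra K D} (hF : ⊥ < F) (hFE : F < E) :
    E = ⊤ := by
  obtain ⟨i, -, hi⟩ := (Nat.dvd_prime_pow hp).1 (hdim ▸ F.finrank_dvd_finrank)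
  obtain ⟨j, hj, hj'⟩ := (Nat.dvd_prime_pow hp).1 (hdim ▸ E.finrank_dvd_finrank)
  have h0i : p ^ 0 < p ^ i := by simpa [finrank_bot, hi] using finrank_lt_finrank_of_lt hF
  have hij : p ^ i < p ^ j := hi ▸ hj' ▸ finrank_lt_finrank_of_lt hFE
  rw [Nat.pow_lt_pow_iff_right hp.one_lt] at h0i hij
  have hj2 : j = 2 := by omega
  exact Algebra.toSubmodule_eq_top.1 <| Submodule.eq_top_of_finrank_eq <| by
    rw [finrank_toSubmodule, hj', hj2, hdim]

end Subalgebra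

theorem adjoin_eq_top_of_not_commute_general
    (K D : Type*) [Field K] [DivisionRing D] [Algebra K D] [FiniteDimensional K D]
    (p : ℕ) (hp : p.Prime) (hdim : Module.finrank K D = p ^ 2)
    (a b : D) (hab : a * b ≠ b * a) :
    Algebra.adjoin K ({a, b} : Set D) = ⊤ := by
  have hbot : ⊥ < Algebra.adjoin K {a} := bot_lt_iff_ne_bot.2 fun h ↦
    hab (Subalgebra.commute_of_mem_bot (h ▸ Algebra.self_mem_adjoin_singleton K a) b).eq
  have hb : b ∈ Algebra.adjoin K ({a, b} : Set D) := Algebra.subset_adjoin (by simp)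
  have hlt : Algebra.adjoin K {a} < Algebra.adjoin K ({a, b} : Set D) :=
    (Algebra.adjoin_mono (by simp)).lt_of_ne fun h ↦
      hab (Algebra.commute_of_mem_adjoin_self (h ▸ hb)).eq
  exact Subalgebra.eq_top_of_bot_lt_of_lt_of_finrank_eq_prime_sq hp hdim hbot hlt

/-- Let `K` be a field and `D` a finite-dimensional central division
algebra over `K` (the center of `D` equals `K`) with `dim_K D = p ^ 2` for a prime `p`.
If `a b : D` do not commute, then the `K`-subalgebra of `D` generated by `a` and `b`
is all of `D`. -/
theorem adjoin_eq_top_of_not_commute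
    (K D : Type*) [Field K] [DivisionRing D] [Algebra K D] [FiniteDimensional K D]
    (hcenter : Subalgebra.center K D = ⊥)
    (p : ℕ) (hp : p.Prime) (hdim : Module.finrank K D = p ^ 2)
    (a b : D) (hab : a * b ≠ b * a) :
    Algebra.adjoin K ({a, b} : Set D) = ⊤ :=
  adjoin_eq_top_of_not_commute_general K D p hp hdim a b hab
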